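/- arXiv:math/0510406 — 2 statements merged into one kernel-verified Lean document; each statement's English description precedes it below -/
import Mathlib

section
/- Φ∧Φ = 14σ·vol₈; equivalently, the standard volume form e∧e₀∧e₁∧⋯∧e₆ of ℝ⁸ equals (σ/14)·Φ∧Φ. -/
open scoped BigOperators RealInnerProductSpace

noncomputable section

abbrev Form (n p : ℕ) := (Fin p → EuclideanSpace ℝ (Fin n)) → ℝ

namespace Form

/-- Wedge product of forms (shuffle convention; full antisymmetrization divided by p!q!). -/
def wedge {n p q : ℕ} (α : Form n p) (β : Form n q) : Form n (p + q) :=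
  fun x =>
    (((p.factorial * q.factorial : ℕ) : ℝ))⁻¹ *
      ∑ σ : Equiv.Perm (Fin (p + q)),
        ((Equiv.Perm.sign σ : ℤ) : ℝ) *
          (α fun i => x (σ (Fin.castAdd q i))) * (β fun j => x (σ (Fin.natAdd p j)))

/-- Inner product of `p`-forms. -/
def inner' {n p : ℕ} (α β : Form n p) : ℝ :=
  ((p.factorial : ℕ) : ℝ)⁻¹ *
    ∑ f : Fin p → Fin n,
      (α fun k => EuclideanSpace.single (f k) 1) * (β fun k => EuclideanSpace.single (f k) 1)

/-- Interior product of a vector and a form. -/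
def iprod {n p : ℕ} (v : EuclideanSpace ℝ (Fin n)) (α : Form n (p + 1)) : Form n p :=
  fun x => α (Fin.cons v x)

end Form

infixl:72 " ⋏ " => Form.wedge

/-- The 1-form dual to a vector. -/
def dual {n : ℕ} (v : EuclideanSpace ℝ (Fin n)) : Form n 1 := fun x => ⟪v, x 0⟫

abbrev E8 := EuclideanSpace ℝ (Fin 8)

/-- The basis vector `e`. -/
def e8 : E8 := EuclideanSpace.single 7 1

/-- The basis vectors `e₀,…,e₆` indexed mod 7. -/
def u7 (i : ZMod 7) : E8 := EuclideanSpace.single ⟨i.val, i.val_lt.trans (by norm_num)⟩ 1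

/-- The basis indexed by ℤ₈, with `e₇ = e`. -/
def u8 (i : ZMod 8) : E8 := EuclideanSpace.single ⟨i.val, i.val_lt⟩ 1

/-- The Spin(7) fundamental 4-form. -/
def Phi (σ : ℝ) : Form 8 4 := fun x =>
  (∑ i : ZMod 7, (dual e8 ⋏ dual (u7 i) ⋏ dual (u7 (i + 1)) ⋏ dual (u7 (i + 3))) x)
    - σ * ∑ i : ZMod 7,
        (dual (u7 (i + 2)) ⋏ dual (u7 (i + 4)) ⋏ dual (u7 (i + 5)) ⋏ dual (u7 (i + 6))) x

/-- The standard volume form of ℝ⁸. -/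
def vol8 : Form 8 8 :=
  dual e8 ⋏ dual (u7 0) ⋏ dual (u7 1) ⋏ dual (u7 2) ⋏ dual (u7 3) ⋏ dual (u7 4) ⋏ dual (u7 5)
    ⋏ dual (u7 6)

/-- The 2-forms spanning spin(7)ᗮ. -/
def beta (σ : ℝ) (i : ZMod 7) : Form 8 2 := fun x =>
  σ * (dual (u7 i) ⋏ dual e8) x + (dual (u7 (i + 1)) ⋏ dual (u7 (i + 3))) x
    + (dual (u7 (i + 4)) ⋏ dual (u7 (i + 5))) x + (dual (u7 (i + 2)) ⋏ dual (u7 (i + 6))) x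

/-! Write each monomial of `Φ` as the determinant form `x ↦ det ⟪vⱼ, xᵢ⟫` of its four basis
vectors; the wedge of two determinant forms is the determinant form of the concatenated frame,
so it vanishes as soon as a basis vector repeats. Among the `14²` products in `Φ ∧ Φ`, two
monomials containing `e` share it, and two monomials without `e` use eight of the seven `eᵢ`.
The product of `e ∧ eᵢ ∧ eᵢ₊₁ ∧ eᵢ₊₃` with the complementary monomial of index `j` is nonzero
only for `i = j`, because the translates of `{0, 1, 3}`, a perfect difference set mod 7, are
pairwise distinct; for `i = j` it is `-vol₈`, the frame `e, eᵢ, …, eᵢ₊₆` being an even cyclic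
rotation of the standard one. Each of these seven products occurs twice with coefficient `-σ`. -/

open Finset Equiv Function

theorem Fin.comp_append {α β : Type*} {p q : ℕ} (f : α → β) (a : Fin p → α) (b : Fin q → α) :
    f ∘ Fin.append a b = Fin.append (f ∘ a) (f ∘ b) := by
  funext k
  refine Fin.addCases (fun l => ?_) (fun l => ?_) k <;> simp

theorem Fin.append_comp_finAddFlip {α : Type*} {p q : ℕ} (a : Fin p → α) (b : Fin q → α) :
    Fin.append a b ∘ finAddFlip = Fin.append b a := by
  funext k
  refine Fin.addCases (fun l => ?_) (fun l => ?_) k <;>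
    simp [finAddFlip_apply_castAdd, finAddFlip_apply_natAdd]

namespace Form

variable {n p q : ℕ}

def wedgeBilin : Form n p →ₗ[ℝ] Form n q →ₗ[ℝ] Form n (p + q) :=
  LinearMap.mk₂ ℝ (· ⋏ ·)
    (fun α₁ α₂ β => funext fun x => by
      simp only [wedge, Pi.add_apply, mul_add, add_mul, sum_add_distrib])
    (fun c α β => funext fun x => by
      simp only [wedge, Pi.smul_apply, smul_eq_mul, mul_sum]; congr 1; ext; ring)
    (fun α β₁ β₂ => funext fun x => by
      simp only [wedge, Pi.add_apply, mul_add, sum_add_distrib])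
    (fun c α β => funext fun x => by
      simp only [wedge, Pi.smul_apply, smul_eq_mul, mul_sum]; congr 1; ext; ring)

theorem wedgeBilin_apply (α : Form n p) (β : Form n q) : wedgeBilin α β = α ⋏ β := rfl

def detForm (v : Fin p → EuclideanSpace ℝ (Fin n)) : Form n p :=
  fun x => (Matrix.of fun i j => ⟪v j, x i⟫).det

theorem detForm_apply (v x : Fin p → EuclideanSpace ℝ (Fin n)) :
    detForm v x = ∑ π : Perm (Fin p), (Perm.sign π : ℝ) * ∏ m, ⟪v m, x (π m)⟫ :=
  Matrix.det_apply' _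

theorem detForm_comp_perm (v : Fin p → EuclideanSpace ℝ (Fin n)) (π : Perm (Fin p)) :
    detForm (v ∘ π) = (Perm.sign π : ℝ) • detForm v :=
  funext fun x => Matrix.det_permute' π (Matrix.of fun i j => ⟪v j, x i⟫)

theorem detForm_eq_zero_of_not_injective {v : Fin p → EuclideanSpace ℝ (Fin n)}
    (hv : ¬ Injective v) : detForm v = 0 := by
  obtain ⟨i, j, hvij, hij⟩ := not_injective_iff.mp hv
  exact funext fun x => Matrix.det_zero_of_column_eq hij fun k => by simp [hvij]

theorem dual_eq_detForm (v : EuclideanSpace ℝ (Fin n)) : dual v = detForm ![v] :=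
  funext fun x => by simp [dual, detForm]

theorem detForm_wedge_detForm (v : Fin p → EuclideanSpace ℝ (Fin n))
    (w : Fin q → EuclideanSpace ℝ (Fin n)) :
    detForm v ⋏ detForm w = detForm (Fin.append v w) := by
  funext x
  set u := Fin.append v w
  let blk (τ : Perm (Fin p)) (ρ : Perm (Fin q)) : Perm (Fin (p + q)) :=
    finSumFinEquiv.permCongr (τ.sumCongr ρ)
  -- expanding both determinants, the `(τ, ρ)` term is the Leibniz term of `u` at `σ * blk τ ρ`
  have expand (σ : Perm (Fin (p + q))) :
      (Perm.sign σ : ℝ) * detForm v (fun i => x (σ (Fin.castAdd q i)))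
          * detForm w (fun j => x (σ (Fin.natAdd p j)))
        = ∑ τ, ∑ ρ, (Perm.sign (σ * blk τ ρ) : ℝ) * ∏ k, ⟪u k, x ((σ * blk τ ρ) k)⟫ := by
    rw [detForm_apply, detForm_apply, mul_assoc, sum_mul_sum, mul_sum]
    refine sum_congr rfl fun τ _ => ?_
    rw [mul_sum]
    refine sum_congr rfl fun ρ _ => ?_
    simp only [blk, Perm.sign_mul, Perm.sign_permCongr, Perm.sign_sumCongr, Fin.prod_univ_add,
      Perm.mul_apply, Equiv.permCongr_apply, finSumFinEquiv_symm_apply_castAdd,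
      finSumFinEquiv_symm_apply_natAdd, Perm.sumCongr_apply, Sum.map_inl, Sum.map_inr,
      finSumFinEquiv_apply_left, finSumFinEquiv_apply_right, u, Fin.append_left, Fin.append_right]
    push_cast
    ring
  calc (detForm v ⋏ detForm w) x
      = ((p.factorial * q.factorial : ℕ) : ℝ)⁻¹ * ∑ τ, ∑ ρ, ∑ σ,
          (Perm.sign (σ * blk τ ρ) : ℝ) * ∏ k, ⟪u k, x ((σ * blk τ ρ) k)⟫ := by
        simp only [wedge, expand]
        rw [sum_comm]
        simp only [sum_comm (γ := Perm (Fin (p + q)))]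
    _ = ((p.factorial * q.factorial : ℕ) : ℝ)⁻¹ * ∑ _τ : Perm (Fin p), ∑ _ρ : Perm (Fin q),
          detForm u x := by
        simp only [detForm_apply]
        congr 1
        exact sum_congr rfl fun τ _ => sum_congr rfl fun ρ _ =>
          Equiv.sum_comp (Equiv.mulRight (blk τ ρ)) fun π => (Perm.sign π : ℝ) * ∏ k, ⟪u k, x (π k)⟫
    _ = detForm u x := by
        simp only [sum_const, card_univ, Fintype.card_perm, Fintype.card_fin, nsmul_eq_mul]
        push_cast
        field_simp

theorem detForm_wedge_comm_of_four (v w : Fin 4 → EuclideanSpace ℝ (Fin n)) :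
    detForm w ⋏ detForm v = detForm v ⋏ detForm w := by
  have hflip : Perm.sign (finAddFlip : Perm (Fin (4 + 4))) = 1 := by decide
  rw [detForm_wedge_detForm, detForm_wedge_detForm, ← Fin.append_comp_finAddFlip,
    detForm_comp_perm, hflip]
  simp

end Form

open Form

/- Frames are encoded by their index tuples (`none` for `e`), on which repetitions and
rotations are decidable. -/
def spinBasis : Option (ZMod 7) → E8
  | none => e8
  | some i => u7 i

def idxA (i : ZMod 7) : Fin 4 → Option (ZMod 7) := ![none, some i, some (i + 1), some (i + 3)]

def idxB (i : ZMod 7) : Fin 4 → Option (ZMod 7) :=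
  ![some (i + 2), some (i + 4), some (i + 5), some (i + 6)]

def idxFrame (i : ZMod 7) : Fin 8 → Option (ZMod 7) :=
  ![none, some i, some (i + 1), some (i + 2), some (i + 3), some (i + 4), some (i + 5),
    some (i + 6)]

abbrev phiA (i : ZMod 7) : Form 8 4 := detForm (spinBasis ∘ idxA i)

abbrev phiB (i : ZMod 7) : Form 8 4 := detForm (spinBasis ∘ idxB i)

theorem Phi_eq_sum (σ : ℝ) : Phi σ = ∑ i, phiA i - σ • ∑ i, phiB i := by
  have hA (i : ZMod 7) :
      dual e8 ⋏ dual (u7 i) ⋏ dual (u7 (i + 1)) ⋏ dual (u7 (i + 3)) = phiA i := by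
    simp only [dual_eq_detForm, detForm_wedge_detForm]
    exact congrArg detForm (funext fun k => by fin_cases k <;> rfl)
  have hB (i : ZMod 7) :
      dual (u7 (i + 2)) ⋏ dual (u7 (i + 4)) ⋏ dual (u7 (i + 5)) ⋏ dual (u7 (i + 6)) = phiB i := by
    simp only [dual_eq_detForm, detForm_wedge_detForm]
    exact congrArg detForm (funext fun k => by fin_cases k <;> rfl)
  funext x
  simp only [Phi, hA, hB, Pi.sub_apply, Pi.smul_apply, Finset.sum_apply, smul_eq_mul]

theorem idxFrame_add_one (i : ZMod 7) : idxFrame (i + 1) = idxFrame i ∘ c[1, 2, 3, 4, 5, 6, 7] := by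
  revert i
  decide

theorem vol8_eq_detForm_idxFrame (i : ZMod 7) : vol8 = detForm (spinBasis ∘ idxFrame i) := by
  obtain ⟨k, rfl⟩ := ZMod.natCast_zmod_surjective i
  induction k with
  | zero =>
    simp only [vol8, dual_eq_detForm, detForm_wedge_detForm]
    exact congrArg detForm (funext fun k => by fin_cases k <;> rfl)
  | succ k ih =>
    have hsign : Perm.sign (c[1, 2, 3, 4, 5, 6, 7] : Perm (Fin 8)) = 1 := by decide
    rw [Nat.cast_succ, idxFrame_add_one, ← comp_assoc, detForm_comp_perm, hsign, ih]
    simp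

theorem detForm_spinBasis_eq_zero {p : ℕ} {a : Fin p → Option (ZMod 7)} (ha : ¬ Injective a) :
    detForm (spinBasis ∘ a) = 0 :=
  detForm_eq_zero_of_not_injective fun h => ha h.of_comp

theorem phiA_wedge_phiA (i j : ZMod 7) : phiA i ⋏ phiA j = 0 := by
  rw [detForm_wedge_detForm, ← Fin.comp_append]
  exact detForm_spinBasis_eq_zero (not_injective_iff.mpr ⟨0, 4, rfl, by decide⟩)

theorem phiB_wedge_phiB (i j : ZMod 7) : phiB i ⋏ phiB j = 0 := by
  rw [detForm_wedge_detForm, ← Fin.comp_append]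
  exact detForm_spinBasis_eq_zero (by revert i j; decide)

theorem phiA_wedge_phiB (i j : ZMod 7) : phiA i ⋏ phiB j = if i = j then -vol8 else 0 := by
  rw [detForm_wedge_detForm, ← Fin.comp_append]
  split_ifs with hij
  · subst hij
    have hswap : Fin.append (idxA i) (idxB i) = idxFrame i ∘ Equiv.swap 3 4 := by
      funext k; fin_cases k <;> rfl
    rw [hswap, ← comp_assoc, detForm_comp_perm, Perm.sign_swap (by decide),
      ← vol8_eq_detForm_idxFrame]
    simp
  · exact detForm_spinBasis_eq_zero (by revert i j; decide)

theorem phiB_wedge_phiA (i j : ZMod 7) : phiB i ⋏ phiA j = phiA j ⋏ phiB i :=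
  detForm_wedge_comm_of_four _ _

theorem Phi_wedge_Phi (σ : ℝ) : Phi σ ⋏ Phi σ = (14 * σ) • vol8 := by
  rw [← wedgeBilin_apply, Phi_eq_sum]
  simp only [map_sub, map_smul, map_sum, LinearMap.sub_apply, LinearMap.smul_apply,
    LinearMap.sum_apply, wedgeBilin_apply, phiA_wedge_phiA, phiB_wedge_phiB, phiB_wedge_phiA,
    phiA_wedge_phiB, sum_const_zero, sum_ite_eq, sum_ite_eq', mem_univ, if_true, sum_const,
    card_univ, ZMod.card, smul_zero, sub_zero, zero_sub]
  module

/-- Φ∧Φ = 14σ·vol₈; equivalently, the standard volume form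
`e∧e₀∧⋯∧e₆` of ℝ⁸ equals `(σ/14)·Φ∧Φ`. -/
theorem stmt0 (σ : ℝ) (hσ : σ = 1 ∨ σ = -1) (x : Fin 8 → E8) :
    (Phi σ ⋏ Phi σ) x = 14 * σ * vol8 x ∧ vol8 x = σ / 14 * (Phi σ ⋏ Phi σ) x := by
  have hPhi : (Phi σ ⋏ Phi σ) x = 14 * σ * vol8 x := congrFun (Phi_wedge_Phi σ) x
  have hσσ : σ * σ = 1 := by rcases hσ with rfl | rfl <;> norm_num
  refine ⟨hPhi, ?_⟩
  rw [hPhi]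
  linear_combination (-vol8 x) * hσσ
end
end

section
/- Every 2-form ψ on ℝ⁸ can be written uniquely as ψ = ψ₀ + Σ_{i∈ℤ₇} c_i β_i, where ψ₀ satisfies σψ₀(e_i, e) + ψ₀(e_{i+1}, e_{i+3}) + ψ₀(e_{i+4}, e_{i+5}) + ψ₀(e_{i+2}, e_{i+6}) = 0 for all i ∈ ℤ₇ and c_i ∈ ℝ; moreover necessarily c_i = ⟨ψ, β_i⟩/4. (Orthogonal decomposition Λ²(ℝ⁸)* = spin(7) ⊕ spin(7)⊥.) -/
/-! The seven functionals `L_i = spinConstraint σ i`,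
`L_i ψ = σ ψ(e_i, e) + ψ(e_{i+1}, e_{i+3}) + ψ(e_{i+4}, e_{i+5}) + ψ(e_{i+2}, e_{i+6})`,
whose common kernel is `spin(7)`, satisfy `L_i ψ = ⟨ψ, β_i⟩`, and
`L_i β_j = (σ² + 3) δ_ij = 4 δ_ij` because the pairs `{i+1, i+3}, {i+4, i+5}, {i+2, i+6}`,
`i ∈ ℤ₇`, partition the 21 two-element subsets of `ℤ₇`. So `(L_i, β_i)` is a biorthogonal
system, and `ψ₀ = ψ - Σ (L_i ψ / 4) β_i` is the unique decomposition. -/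

open scoped BigOperators RealInnerProductSpace

noncomputable section

infixl:72 " ⋏ " => Form.wedge

/-- The wedge of the 1-forms dual to `u` and `v`, as an alternating 2-form. -/
def wedge1A (u v : E8) : AlternatingMap ℝ E8 ℝ (Fin 2) :=
  MultilinearMap.alternatization
    ((MultilinearMap.mkPiAlgebra ℝ (Fin 2) ℝ).compLinearMap
      ![(innerSL ℝ u).toLinearMap, (innerSL ℝ v).toLinearMap])

/-- The 2-forms `β_i` spanning spin(7)ᗮ, as alternating 2-forms. -/
def betaA (σ : ℝ) (i : ZMod 7) : AlternatingMap ℝ E8 ℝ (Fin 2) :=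
  σ • wedge1A (u7 i) e8 + wedge1A (u7 (i + 1)) (u7 (i + 3))
    + wedge1A (u7 (i + 4)) (u7 (i + 5)) + wedge1A (u7 (i + 2)) (u7 (i + 6))

section Biorthogonal

variable {K V ι : Type*} [Field K] [AddCommGroup V] [Module K V] [Fintype ι] [DecidableEq ι]
  (L : ι → Module.Dual K V) (b : ι → V) {k : K}

theorem apply_add_sum_smul_of_biorthogonal
    (hLb : ∀ i j, L i (b j) = if i = j then k else 0) (v₀ : V) (c : ι → K) (i : ι) :
    L i (v₀ + ∑ j, c j • b j) = L i v₀ + c i * k := by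
  simp only [map_add, map_sum, map_smul, hLb, smul_eq_mul, mul_ite, mul_zero,
    Finset.sum_ite_eq, Finset.mem_univ, if_true]

theorem coeff_eq_of_biorthogonal (hk : k ≠ 0)
    (hLb : ∀ i j, L i (b j) = if i = j then k else 0) {v v₀ : V} {c : ι → K}
    (hv₀ : ∀ i, L i v₀ = 0) (hv : v = v₀ + ∑ j, c j • b j) (i : ι) :
    c i = L i v / k := by
  rw [hv, apply_add_sum_smul_of_biorthogonal L b hLb, hv₀, zero_add,
    mul_div_cancel_right₀ _ hk]

theorem existsUnique_add_sum_smul_of_biorthogonal (hk : k ≠ 0)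
    (hLb : ∀ i j, L i (b j) = if i = j then k else 0) (v : V) :
    ∃! p : V × (ι → K), (∀ i, L i p.1 = 0) ∧ v = p.1 + ∑ j, p.2 j • b j := by
  refine ⟨(v - ∑ j, (L j v / k) • b j, fun j => L j v / k), ⟨fun i => ?_, ?_⟩, ?_⟩
  · have := apply_add_sum_smul_of_biorthogonal L b hLb
      (v - ∑ j, (L j v / k) • b j) (fun j => L j v / k) i
    rw [sub_add_cancel, div_mul_cancel₀ _ hk] at this
    linear_combination -this
  · exact (sub_add_cancel _ _).symm
  · rintro ⟨v₀, c⟩ ⟨hv₀, hv⟩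
    have hc : c = fun j => L j v / k :=
      funext (coeff_eq_of_biorthogonal L b hk hLb hv₀ hv)
    subst hc
    simp only [Prod.mk.injEq, and_true]
    exact eq_sub_of_add_eq hv.symm

end Biorthogonal

theorem MultilinearMap.apply_eq_sum_basis {R ι κ M N : Type*} [CommSemiring R] [Fintype ι]
    [DecidableEq ι] [Fintype κ] [AddCommMonoid M] [Module R M] [AddCommMonoid N] [Module R N]
    (f : MultilinearMap R (fun _ : ι => M) N) (e : Module.Basis κ R M) (x : ι → M) :
    f x = ∑ r : ι → κ, (∏ k, e.repr (x k) (r k)) • f fun k => e (r k) := by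
  conv_lhs => rw [show x = fun k => ∑ j, e.repr (x k) j • e j from
    funext fun k => (e.sum_repr (x k)).symm]
  rw [MultilinearMap.map_sum]
  simp_rw [MultilinearMap.map_smul_univ]

namespace Form

variable {n p : ℕ}

theorem inner'_add_right (α β γ : Form n p) :
    inner' α (β + γ) = inner' α β + inner' α γ := by
  simp only [inner', Pi.add_apply, mul_add, Finset.sum_add_distrib]

theorem inner'_smul_right (α β : Form n p) (c : ℝ) : inner' α (c • β) = c * inner' α β := by
  simp only [inner', Pi.smul_apply, smul_eq_mul, Finset.mul_sum]
  exact Finset.sum_congr rfl fun _ _ => by ring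

end Form

theorem wedge1A_apply (u v : E8) (x : Fin 2 → E8) :
    wedge1A u v x = ⟪u, x 0⟫ * ⟪v, x 1⟫ - ⟪u, x 1⟫ * ⟪v, x 0⟫ := by
  have hperm : (Finset.univ : Finset (Equiv.Perm (Fin 2))) = {1, Equiv.swap 0 1} := by decide
  rw [wedge1A, MultilinearMap.alternatization_apply, hperm, Finset.sum_insert (by decide),
    Finset.sum_singleton]
  simp only [Equiv.Perm.sign_one, ContinuousLinearMap.toLinearMap_innerSL_apply,
    MultilinearMap.domDomCongr_apply, Equiv.Perm.coe_one, id_eq, MultilinearMap.compLinearMap_apply,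
    MultilinearMap.mkPiAlgebra_apply, Fin.prod_univ_two, Matrix.cons_val_zero,
    innerₛₗ_apply_apply, Matrix.cons_val_one, Matrix.cons_val_fin_one, one_smul,
    Equiv.Perm.sign_swap', zero_ne_one, ↓reduceIte, Equiv.swap_apply_def, one_ne_zero,
    Units.neg_smul]
  ring

theorem inner'_wedge1A (ψ : AlternatingMap ℝ E8 ℝ (Fin 2)) (u v : E8) :
    Form.inner' ⇑ψ ⇑(wedge1A u v) = ψ ![u, v] := by
  have expand := fun x : Fin 2 → E8 =>
    ψ.toMultilinearMap.apply_eq_sum_basis (EuclideanSpace.basisFun (Fin 8) ℝ).toBasis x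
  have huv := expand ![u, v]
  have hvu := expand ![v, u]
  simp only [OrthonormalBasis.coe_toBasis_repr_apply, EuclideanSpace.basisFun_repr,
    OrthonormalBasis.coe_toBasis, EuclideanSpace.basisFun_apply, Fin.prod_univ_two,
    Matrix.cons_val_zero, Matrix.cons_val_one, smul_eq_mul, AlternatingMap.coe_multilinearMap]
    at huv hvu
  have hswap : ψ ![v, u] = -ψ ![u, v] := by
    rw [← ψ.map_swap ![u, v] (show (0 : Fin 2) ≠ 1 by decide)]
    congr 1
    ext k : 1
    fin_cases k <;> rfl
  have hsum : ∑ x : Fin 2 → Fin 8, (ψ fun k => EuclideanSpace.single (x k) 1) *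
      (u (x 0) * v (x 1) - u (x 1) * v (x 0)) = ψ ![u, v] - ψ ![v, u] := by
    rw [huv, hvu, ← Finset.sum_sub_distrib]
    exact Finset.sum_congr rfl fun _ _ => by ring
  simp only [Form.inner', wedge1A_apply, EuclideanSpace.inner_single_right, one_mul,
    conj_trivial, hsum, hswap]
  norm_num [Nat.factorial]
  ring

theorem inner_u7_u7 (i j : ZMod 7) : ⟪u7 i, u7 j⟫ = if i = j then 1 else 0 := by
  simp [u7, EuclideanSpace.inner_single_left, (ZMod.val_injective 7).eq_iff]

theorem inner_u7_e8 (i : ZMod 7) : ⟪u7 i, e8⟫ = 0 := by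
  simp [u7, e8, EuclideanSpace.inner_single_left, Fin.ext_iff,
    i.val_lt.ne']

theorem inner_e8_u7 (i : ZMod 7) : ⟪e8, u7 i⟫ = 0 := by
  rw [real_inner_comm, inner_u7_e8]

theorem inner_e8_e8 : ⟪e8, e8⟫ = 1 := by
  simp [e8]

def spinConstraint (σ : ℝ) (i : ZMod 7) : Module.Dual ℝ (AlternatingMap ℝ E8 ℝ (Fin 2)) where
  toFun ψ := σ * ψ ![u7 i, e8] + ψ ![u7 (i + 1), u7 (i + 3)] + ψ ![u7 (i + 4), u7 (i + 5)]
    + ψ ![u7 (i + 2), u7 (i + 6)]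
  map_add' ψ φ := by simp only [AlternatingMap.add_apply]; ring
  map_smul' c ψ := by simp only [AlternatingMap.smul_apply, smul_eq_mul, RingHom.id_apply]; ring

-- `betaA σ j (e_a, e_b)`, valued in `ℤ` so that `betaCoeff_add_add` can be checked by `decide`.
def betaCoeff (j a b : ZMod 7) : ℤ :=
  ((if j + 1 = a then 1 else 0) * (if j + 3 = b then 1 else 0)
    - (if j + 1 = b then 1 else 0) * (if j + 3 = a then 1 else 0))
  + ((if j + 4 = a then 1 else 0) * (if j + 5 = b then 1 else 0)
    - (if j + 4 = b then 1 else 0) * (if j + 5 = a then 1 else 0))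
  + ((if j + 2 = a then 1 else 0) * (if j + 6 = b then 1 else 0)
    - (if j + 2 = b then 1 else 0) * (if j + 6 = a then 1 else 0))

theorem betaA_apply_u7_e8 (σ : ℝ) (j a : ZMod 7) :
    betaA σ j ![u7 a, e8] = σ * if a = j then 1 else 0 := by
  simp only [betaA, AlternatingMap.add_apply, AlternatingMap.smul_apply, smul_eq_mul,
    wedge1A_apply, Matrix.cons_val_zero, Matrix.cons_val_one, inner_u7_u7, inner_u7_e8,
    inner_e8_u7, inner_e8_e8, @eq_comm _ j a]
  ring

theorem betaA_apply_u7_u7 (σ : ℝ) (j a b : ZMod 7) :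
    betaA σ j ![u7 a, u7 b] = betaCoeff j a b := by
  simp only [betaA, AlternatingMap.add_apply, AlternatingMap.smul_apply, smul_eq_mul,
    wedge1A_apply, Matrix.cons_val_zero, Matrix.cons_val_one, inner_u7_u7, inner_e8_u7,
    betaCoeff]
  push_cast
  ring

theorem betaCoeff_add_add (i j : ZMod 7) :
    betaCoeff j (i + 1) (i + 3) + betaCoeff j (i + 4) (i + 5) + betaCoeff j (i + 2) (i + 6)
      = if i = j then 3 else 0 := by
  revert i j
  decide

theorem spinConstraint_betaA (σ : ℝ) (i j : ZMod 7) :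
    spinConstraint σ i (betaA σ j) = if i = j then σ ^ 2 + 3 else 0 := by
  have hcoeff : (betaCoeff j (i + 1) (i + 3) + betaCoeff j (i + 4) (i + 5)
      + betaCoeff j (i + 2) (i + 6) : ℝ) = if i = j then 3 else 0 := by
    exact_mod_cast betaCoeff_add_add i j
  simp only [spinConstraint, LinearMap.coe_mk, AddHom.coe_mk, betaA_apply_u7_e8,
    betaA_apply_u7_u7]
  split_ifs at hcoeff ⊢ <;> linear_combination hcoeff

theorem inner'_betaA (σ : ℝ) (ψ : AlternatingMap ℝ E8 ℝ (Fin 2)) (i : ZMod 7) :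
    Form.inner' ⇑ψ ⇑(betaA σ i) = spinConstraint σ i ψ := by
  have hcoe : (⇑(betaA σ i) : Form 8 2) = σ • ⇑(wedge1A (u7 i) e8)
      + ⇑(wedge1A (u7 (i + 1)) (u7 (i + 3))) + ⇑(wedge1A (u7 (i + 4)) (u7 (i + 5)))
      + ⇑(wedge1A (u7 (i + 2)) (u7 (i + 6))) := by
    ext x
    simp only [betaA, AlternatingMap.add_apply, AlternatingMap.smul_apply, Pi.add_apply,
      Pi.smul_apply]
  rw [hcoe]
  simp only [Form.inner'_add_right, Form.inner'_smul_right, inner'_wedge1A]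
  rfl

/-- every 2-form `ψ` on ℝ⁸ decomposes uniquely as `ψ = ψ₀ + Σ_i c_i β_i` with
`ψ₀ ∈ spin(7)`; moreover necessarily `c_i = ⟨ψ,β_i⟩/4`. -/
theorem stmt6 (σ : ℝ) (hσ : σ = 1 ∨ σ = -1) (ψ : AlternatingMap ℝ E8 ℝ (Fin 2)) :
    (∃! p : AlternatingMap ℝ E8 ℝ (Fin 2) × (ZMod 7 → ℝ),
        (∀ i : ZMod 7,
          σ * p.1 ![u7 i, e8] + p.1 ![u7 (i + 1), u7 (i + 3)] + p.1 ![u7 (i + 4), u7 (i + 5)]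
            + p.1 ![u7 (i + 2), u7 (i + 6)] = 0) ∧
        ψ = p.1 + ∑ i : ZMod 7, p.2 i • betaA σ i) ∧
    (∀ (ψ₀ : AlternatingMap ℝ E8 ℝ (Fin 2)) (c : ZMod 7 → ℝ),
        (∀ i : ZMod 7,
          σ * ψ₀ ![u7 i, e8] + ψ₀ ![u7 (i + 1), u7 (i + 3)] + ψ₀ ![u7 (i + 4), u7 (i + 5)]
            + ψ₀ ![u7 (i + 2), u7 (i + 6)] = 0) →
        ψ = ψ₀ + ∑ i : ZMod 7, c i • betaA σ i →
        ∀ i : ZMod 7, c i = Form.inner' (⇑ψ : Form 8 2) (⇑(betaA σ i) : Form 8 2) / 4) := by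
  have hσ2 : σ ^ 2 + 3 = 4 := by rcases hσ with rfl | rfl <;> norm_num
  have hLb : ∀ i j, spinConstraint σ i (betaA σ j) = if i = j then 4 else 0 := fun i j => by
    rw [spinConstraint_betaA, hσ2]
  refine ⟨existsUnique_add_sum_smul_of_biorthogonal (spinConstraint σ) _ four_ne_zero hLb ψ,
    fun ψ₀ c hψ₀ hψ i => ?_⟩
  rw [inner'_betaA]
  exact coeff_eq_of_biorthogonal (spinConstraint σ) _ four_ne_zero hLb hψ₀ hψ i
end
end
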